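/- arXiv:2001.07693 — 4 statements merged into one kernel-verified Lean document; each statement's English description precedes it below -/
import Mathlib

section
/- Let 0 < β < α and C̃ > 0. Let g : ℝ → ℝ be a continuous function satisfying |∫_{-∞}^T e^{αt} g(t) dt| ≤ C̃ e^{βT} for all T ∈ ℝ. Let ε > 0 and κ > 0. Then for every T ≥ T₀ := (1/ε) log(2C̃(β+ε)/κ) and every S ≥ T + (4C̃/κ) e^{-εT}, there exists t ∈ [T, S] with |g(t)| ≤ κ e^{-(α-β)t + εt}. -/
/-!
If `|g t| > κ e^{(β + ε - α) t}` held throughout `[T, S]`, then `g` would keep one sign there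
(intermediate value theorem), so `|∫_T^S e^{α t} g|` would exceed
`∫_T^S κ e^{(β + ε) t} = κ (e^{(β + ε) S} - e^{(β + ε) T}) / (β + ε)`.
Writing `∫_T^S` as a difference of two integrals over half-lines, the hypothesis bounds it by
`C (e^{β S} + e^{β T})`. The choice of `T₀` and of `S - T` makes these bounds incompatible, through
the elementary inequality `d (e^y + 1) ≤ 4 (e^y - 1)` for `0 ≤ d ≤ min y 2`.
-/

open MeasureTheory Set Real

theorem mul_exp_add_one_le_four_mul_exp_sub_one {y : ℝ} (h0 : 0 ≤ y) (h2 : y ≤ 2) :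
    y * (exp y + 1) ≤ 4 * (exp y - 1) := by
  have hhalf : exp y = exp (y / 2) ^ 2 := by rw [← exp_nat_mul]; ring_nf
  have hsq : (1 + y / 2) ^ 2 ≤ exp (y / 2) ^ 2 :=
    pow_le_pow_left₀ (by linarith) (by linarith [add_one_le_exp (y / 2)]) 2
  rw [hhalf]
  nlinarith [mul_le_mul_of_nonneg_left hsq (by linarith : (0:ℝ) ≤ 4 - y),
    mul_nonneg h0 (by nlinarith : (0:ℝ) ≤ 4 - y ^ 2)]

theorem mul_exp_add_one_le_four_mul_exp_sub_one_of_le {d y : ℝ} (h0 : 0 ≤ d) (h2 : d ≤ 2)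
    (hdy : d ≤ y) : d * (exp y + 1) ≤ 4 * (exp y - 1) := by
  have hd := mul_exp_add_one_le_four_mul_exp_sub_one h0 h2
  -- `(exp y - 1) / (exp y + 1) = tanh (y / 2)` is increasing in `y`
  have hmono : (exp d - 1) * (exp y + 1) ≤ (exp y - 1) * (exp d + 1) := by
    nlinarith [exp_le_exp.2 hdy]
  have hpos : 0 < exp d + 1 := by positivity
  refine le_of_mul_le_mul_right ?_ hpos
  nlinarith [mul_le_mul_of_nonneg_right hd (by positivity : (0:ℝ) ≤ exp y + 1)]

theorem IsPreconnected.forall_lt_or_forall_gt {X Y : Type*} [TopologicalSpace X] [LinearOrder Y]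
    [TopologicalSpace Y] [OrderTopology Y] {s : Set X} {f : X → Y} {c : Y}
    (hs : IsPreconnected s) (hf : ContinuousOn f s) (hne : ∀ x ∈ s, f x ≠ c) :
    (∀ x ∈ s, f x < c) ∨ (∀ x ∈ s, c < f x) := by
  have hsub : f '' s ⊆ Iio c ∪ Ioi c := by
    rintro _ ⟨x, hx, rfl⟩
    exact lt_or_gt_of_ne (hne x hx)
  rcases (hs.image f hf).subset_or_subset isOpen_Iio isOpen_Ioi
    (disjoint_left.2 fun _ h₁ h₂ => lt_asymm h₁ h₂) hsub with h | h
  · exact Or.inl fun x hx => h (mem_image_of_mem f hx)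
  · exact Or.inr fun x hx => h (mem_image_of_mem f hx)

theorem integral_lt_abs_integral_of_lt_abs {a b : ℝ} {f h : ℝ → ℝ} (hab : a < b)
    (hf : ContinuousOn f (Icc a b)) (hh : ContinuousOn h (Icc a b))
    (h0 : ∀ t ∈ Icc a b, 0 ≤ h t) (hlt : ∀ t ∈ Icc a b, h t < |f t|) :
    ∫ t in a..b, h t < |∫ t in a..b, f t| := by
  have lt_integral : ∀ φ : ℝ → ℝ, ContinuousOn φ (Icc a b) → (∀ t ∈ Icc a b, h t < φ t) →
      ∫ t in a..b, h t < ∫ t in a..b, φ t := fun φ hφ hhφ =>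
    intervalIntegral.integral_lt_integral_of_continuousOn_of_le_of_exists_lt hab hh hφ
      (fun t ht => (hhφ t (Ioc_subset_Icc_self ht)).le)
      ⟨a, left_mem_Icc.2 hab.le, hhφ a (left_mem_Icc.2 hab.le)⟩
  have hne : ∀ t ∈ Icc a b, f t ≠ 0 := fun t ht hft => by
    have := hlt t ht
    rw [hft, abs_zero] at this
    exact (h0 t ht).not_gt this
  rcases isPreconnected_Icc.forall_lt_or_forall_gt hf hne with hneg | hpos
  · have := lt_integral (fun t => -f t) hf.neg fun t ht => by
      simpa [abs_of_neg (hneg t ht)] using hlt t ht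
    rw [intervalIntegral.integral_neg] at this
    exact this.trans_le (neg_le_abs _)
  · exact (lt_integral f hf fun t ht => by simpa [abs_of_pos (hpos t ht)] using hlt t ht).trans_le
      (le_abs_self _)

theorem integral_const_mul_exp_mul {c : ℝ} (hc : c ≠ 0) (κ a b : ℝ) :
    ∫ t in a..b, κ * exp (c * t) = κ / c * (exp (c * b) - exp (c * a)) := by
  rw [intervalIntegral.integral_const_mul, intervalIntegral.integral_comp_mul_left exp hc,
    integral_exp, smul_eq_mul]
  ring

theorem mul_exp_add_mul_exp_le {β ε C κ T S : ℝ} (hc : 0 < β + ε) (hε : 0 ≤ ε) (hC : 0 ≤ C)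
    (hκ : 0 < κ) (hT : 2 * C * (β + ε) / κ ≤ exp (ε * T))
    (hS : T + 4 * C / κ * exp (-ε * T) ≤ S) :
    C * exp (β * S) + C * exp (β * T) ≤
      κ / (β + ε) * (exp ((β + ε) * S) - exp ((β + ε) * T)) := by
  set c := β + ε
  set δ := 4 * C / κ * exp (-ε * T)
  have hδ : 0 ≤ δ := by positivity
  have hcδ : c * δ ≤ 2 := calc
    c * δ = 2 * (2 * C * c / κ) * exp (-ε * T) := by ring
    _ ≤ 2 * exp (ε * T) * exp (-ε * T) := by gcongr
    _ = 2 := by rw [mul_assoc, ← exp_add]; simp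
  have key := mul_exp_add_one_le_four_mul_exp_sub_one_of_le (y := c * (S - T)) (by positivity) hcδ
    (mul_le_mul_of_nonneg_left (by linarith) hc.le)
  have hβS : exp (β * S) ≤ exp (-ε * T) * exp (c * S) := by
    rw [← exp_add]; exact exp_le_exp.2 (by nlinarith)
  have hβT : exp (β * T) = exp (-ε * T) * exp (c * T) := by rw [← exp_add]; congr 1; ring
  have hcS : exp (c * S) = exp (c * (S - T)) * exp (c * T) := by rw [← exp_add]; congr 1; ring
  have hCδ : C * exp (-ε * T) = κ / (4 * c) * (c * δ) := by simp only [δ]; field_simp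
  -- after factoring out `exp (c * T)` the claim is `key`
  calc C * exp (β * S) + C * exp (β * T)
      ≤ C * exp (-ε * T) * (exp (c * (S - T)) + 1) * exp (c * T) := by
        rw [hβT]
        rw [hcS] at hβS
        linarith [mul_le_mul_of_nonneg_left hβS hC]
    _ = κ / (4 * c) * (c * δ * (exp (c * (S - T)) + 1)) * exp (c * T) := by rw [hCδ]; ring
    _ ≤ κ / (4 * c) * (4 * (exp (c * (S - T)) - 1)) * exp (c * T) := by gcongr
    _ = κ / c * (exp (c * S) - exp (c * T)) := by rw [hcS]; field_simp

theorem stmt0_general (α β C κ ε : ℝ) (hβ : 0 < β) (hC : 0 < C)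
    (hε : 0 < ε) (hκ : 0 < κ) (g : ℝ → ℝ) (hg : Continuous g)
    (hint : ∀ T : ℝ, IntegrableOn (fun t => Real.exp (α * t) * g t) (Iic T))
    (hbd : ∀ T : ℝ, |∫ t in Iic T, Real.exp (α * t) * g t| ≤ C * Real.exp (β * T)) :
    ∀ T ≥ (1 / ε) * Real.log (2 * C * (β + ε) / κ),
      ∀ S ≥ T + (4 * C / κ) * Real.exp (-ε * T),
        ∃ t ∈ Icc T S, |g t| ≤ κ * Real.exp (-(α - β) * t + ε * t) := by
  intro T hT S hS
  by_contra! hlarge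
  have hc : 0 < β + ε := by linarith
  have hTS : T < S := lt_of_lt_of_le (lt_add_of_pos_right T (by positivity)) hS
  have hexpT : 2 * C * (β + ε) / κ ≤ exp (ε * T) := by
    rw [← log_le_iff_le_exp (by positivity), ← div_le_iff₀' hε]
    simpa [div_eq_inv_mul] using hT
  have hlower : ∫ t in T..S, κ * exp ((β + ε) * t) < |∫ t in T..S, exp (α * t) * g t| := by
    refine integral_lt_abs_integral_of_lt_abs hTS (by fun_prop) (by fun_prop)
      (fun t _ => by positivity) fun t ht => ?_
    have hsplit : exp ((β + ε) * t) = exp (α * t) * exp (-(α - β) * t + ε * t) := by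
      rw [← exp_add]; congr 1; ring
    rw [hsplit, abs_mul, abs_of_pos (exp_pos _), mul_left_comm]
    exact mul_lt_mul_of_pos_left (hlarge t ht) (exp_pos _)
  have hupper : |∫ t in T..S, exp (α * t) * g t| ≤ C * exp (β * S) + C * exp (β * T) := by
    rw [← intervalIntegral.integral_Iic_sub_Iic (hint T) (hint S)]
    exact (abs_sub _ _).trans (add_le_add (hbd S) (hbd T))
  have hbounds := mul_exp_add_mul_exp_le hc hε.le hC.le hκ hexpT hS
  rw [integral_const_mul_exp_mul hc.ne'] at hlower
  linarith

theorem stmt0 (α β C κ ε : ℝ) (hβ : 0 < β) (hβα : β < α) (hC : 0 < C)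
    (hε : 0 < ε) (hκ : 0 < κ) (g : ℝ → ℝ) (hg : Continuous g)
    (hint : ∀ T : ℝ, IntegrableOn (fun t => Real.exp (α * t) * g t) (Iic T))
    (hbd : ∀ T : ℝ, |∫ t in Iic T, Real.exp (α * t) * g t| ≤ C * Real.exp (β * T)) :
    ∀ T ≥ (1 / ε) * Real.log (2 * C * (β + ε) / κ),
      ∀ S ≥ T + (4 * C / κ) * Real.exp (-ε * T),
        ∃ t ∈ Icc T S, |g t| ≤ κ * Real.exp (-(α - β) * t + ε * t) :=
  stmt0_general α β C κ ε hβ hC hε hκ g hg hint hbd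
end

section
/- Let 0 < β < α and C̃ > 0. Let g : ℝ → ℝ be Lipschitz continuous with Lipschitz constant L ≥ 0, satisfying |∫_{-∞}^T e^{αt} g(t) dt| ≤ C̃ e^{βT} for all T ∈ ℝ. Then |g(t)| ≤ (C̃ + 4L) e^{-(α-β)t/2} for all t ≥ (2/(α-β)) log(α+β). -/
open MeasureTheory Set

theorem stmt1 (α β C L : ℝ) (hβ : 0 < β) (hβα : β < α) (hC : 0 < C) (hL : 0 ≤ L)
    (g : ℝ → ℝ) (hg : LipschitzWith (Real.toNNReal L) g)
    (hint : ∀ T : ℝ, IntegrableOn (fun t => Real.exp (α * t) * g t) (Iic T))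
    (hbd : ∀ T : ℝ, |∫ t in Iic T, Real.exp (α * t) * g t| ≤ C * Real.exp (β * T)) :
    ∀ t ≥ (2 / (α - β)) * Real.log (α + β),
      |g t| ≤ (C + 4 * L) * Real.exp (-((α - β) / 2) * t) := by
  have hα : 0 < α := hβ.trans hβα
  have hαβ : 0 < α - β := sub_pos.mpr hβα
  have hαβ' : 0 < α + β := by linarith
  have hgc : Continuous g := hg.continuous
  have hLcoe : (Real.toNNReal L : ℝ) = L := Real.coe_toNNReal L hL
  intro t ht
  set s : ℝ := (α - β) / 2 * t with hs
  -- from the hypothesis on t : α + β ≤ exp s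
  have hlogs : Real.log (α + β) ≤ s := by
    have h1 : (α - β) / 2 * ((2 / (α - β)) * Real.log (α + β)) = Real.log (α + β) := by
      field_simp
    calc Real.log (α + β) = (α - β) / 2 * ((2 / (α - β)) * Real.log (α + β)) := h1.symm
      _ ≤ (α - β) / 2 * t := by
          apply mul_le_mul_of_nonneg_left ht (by positivity)
  have hes : α + β ≤ Real.exp s :=
    (Real.log_le_iff_le_exp hαβ').mp hlogs
  have hens : Real.exp (-s) ≤ (α + β)⁻¹ := by
    rw [Real.exp_neg]
    exact inv_anti₀ hαβ' hes
  set h : ℝ := 2 * Real.exp (-s) with hh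
  have hh0 : 0 < h := by positivity
  have hβh : β * h ≤ 1 := by
    have h2 : β * h ≤ β * (2 * (α + β)⁻¹) := by
      have : (0:ℝ) ≤ 2 * β := by positivity
      rw [hh]
      nlinarith [hens]
    have h3 : β * (2 * (α + β)⁻¹) ≤ 1 := by
      rw [show β * (2 * (α + β)⁻¹) = 2 * β / (α + β) by ring, div_le_one hαβ']
      linarith
    linarith
  set a : ℝ := t - h with ha
  set b : ℝ := t + h with hb
  have hab : a ≤ b := by simp only [ha, hb]; linarith
  -- continuity / integrability facts
  have hfc : Continuous fun u => Real.exp (α * u) * g u := by fun_prop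
  have hec : Continuous fun u => Real.exp (α * u) := by fun_prop
  have hfi : IntervalIntegrable (fun u => Real.exp (α * u) * g u) volume a b :=
    hfc.intervalIntegrable a b
  have hei : IntervalIntegrable (fun u => Real.exp (α * u)) volume a b :=
    hec.intervalIntegrable a b
  have hErri : IntervalIntegrable (fun u => Real.exp (α * u) * (g u - g t)) volume a b :=
    (hec.mul (hgc.sub continuous_const)).intervalIntegrable a b
  have hEub : IntervalIntegrable (fun u => Real.exp (α * u) * (L * h)) volume a b :=
    (hec.mul continuous_const).intervalIntegrable a b
  set I2 : ℝ := ∫ u in a..b, Real.exp (α * u) with hI2def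
  -- value of I2
  have hI2 : I2 = (Real.exp (α * b) - Real.exp (α * a)) / α := by
    rw [hI2def, intervalIntegral.integral_comp_mul_left (fun x => Real.exp x) hα.ne',
      integral_exp, smul_eq_mul]
    field_simp
  -- lower bound for I2
  have hsinh : Real.exp (α * h) - Real.exp (-(α * h)) ≥ 2 * (α * h) := by
    have := Real.self_le_sinh_iff.mpr (by positivity : (0:ℝ) ≤ α * h)
    rw [Real.sinh_eq] at this
    linarith
  have hI2lb : 2 * h * Real.exp (α * t) ≤ I2 := by
    rw [hI2]
    have e1 : Real.exp (α * b) = Real.exp (α * t) * Real.exp (α * h) := by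
      rw [← Real.exp_add]; congr 1; rw [hb]; ring
    have e2 : Real.exp (α * a) = Real.exp (α * t) * Real.exp (-(α * h)) := by
      rw [← Real.exp_add]; congr 1; rw [ha]; ring
    rw [e1, e2, le_div_iff₀ hα]
    nlinarith [Real.exp_pos (α * t), hsinh]
  have hI2pos : 0 < I2 := lt_of_lt_of_le (by positivity) hI2lb
  -- splitting the integral
  have hsplit : (∫ u in a..b, Real.exp (α * u) * g u)
      = I2 * g t + ∫ u in a..b, Real.exp (α * u) * (g u - g t) := by
    rw [hI2def, ← intervalIntegral.integral_mul_const,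
      ← intervalIntegral.integral_add (hei.mul_const _) hErri]
    congr 1; ext u; ring
  -- bound on the main integral
  have hmain : |∫ u in a..b, Real.exp (α * u) * g u|
      ≤ C * Real.exp (β * b) + C * Real.exp (β * a) := by
    rw [← intervalIntegral.integral_Iic_sub_Iic (hint a) (hint b)]
    calc |(∫ u in Iic b, Real.exp (α * u) * g u) - ∫ u in Iic a, Real.exp (α * u) * g u|
        ≤ |∫ u in Iic b, Real.exp (α * u) * g u| + |∫ u in Iic a, Real.exp (α * u) * g u| :=
          abs_sub _ _
      _ ≤ C * Real.exp (β * b) + C * Real.exp (β * a) := add_le_add (hbd b) (hbd a)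
  -- bound on the error integral
  have herr : |∫ u in a..b, Real.exp (α * u) * (g u - g t)| ≤ L * h * I2 := by
    calc |∫ u in a..b, Real.exp (α * u) * (g u - g t)|
        ≤ ∫ u in a..b, |Real.exp (α * u) * (g u - g t)| :=
          intervalIntegral.abs_integral_le_integral_abs hab
      _ ≤ ∫ u in a..b, Real.exp (α * u) * (L * h) := by
          apply intervalIntegral.integral_mono_on hab (hErri.abs) hEub
          intro u hu
          rw [abs_mul, abs_of_pos (Real.exp_pos _)]
          apply mul_le_mul_of_nonneg_left _ (Real.exp_pos _).le
          have hd := hg.dist_le_mul u t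
          rw [Real.dist_eq, Real.dist_eq, hLcoe] at hd
          have hut : |u - t| ≤ h := by
            rw [abs_le]; constructor
            · simp only [ha] at hu; have := hu.1; linarith
            · simp only [hb] at hu; have := hu.2; linarith
          calc |g u - g t| ≤ L * |u - t| := hd
            _ ≤ L * h := mul_le_mul_of_nonneg_left hut hL
      _ = I2 * (L * h) := intervalIntegral.integral_mul_const _ _
      _ = L * h * I2 := by ring
  -- key inequality : (|g t| - L * h) * I2 ≤ C * exp (β b) + C * exp (β a)
  have hkey : (|g t| - L * h) * I2 ≤ C * Real.exp (β * b) + C * Real.exp (β * a) := by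
    have h1 : |g t| * I2 = |I2 * g t| := by
      rw [abs_mul, abs_of_pos hI2pos]; ring
    have h0 : I2 * g t = (∫ u in a..b, Real.exp (α * u) * g u)
        - ∫ u in a..b, Real.exp (α * u) * (g u - g t) := by linarith [hsplit]
    have h2 : |I2 * g t| ≤ |∫ u in a..b, Real.exp (α * u) * g u|
        + |∫ u in a..b, Real.exp (α * u) * (g u - g t)| := by
      rw [h0]; exact abs_sub _ _
    calc (|g t| - L * h) * I2 = |g t| * I2 - L * h * I2 := by ring
      _ ≤ C * Real.exp (β * b) + C * Real.exp (β * a) := by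
          rw [h1]; linarith [h2, hmain, herr]
  -- bound the right-hand side
  have hrhs : C * Real.exp (β * b) + C * Real.exp (β * a) ≤ 4 * C * Real.exp (β * t) := by
    have e1 : Real.exp (β * b) = Real.exp (β * t) * Real.exp (β * h) := by
      rw [← Real.exp_add]; congr 1; rw [hb]; ring
    have e2 : Real.exp (β * a) ≤ Real.exp (β * t) := by
      apply Real.exp_le_exp.mpr
      have : a ≤ t := by rw [ha]; linarith
      exact mul_le_mul_of_nonneg_left this hβ.le
    have e3 : Real.exp (β * h) ≤ 3 := by
      calc Real.exp (β * h) ≤ Real.exp 1 := Real.exp_le_exp.mpr hβh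
        _ ≤ 3 := by linarith [Real.exp_one_lt_d9]
    have e4 : C * (Real.exp (β * t) * Real.exp (β * h)) ≤ C * (Real.exp (β * t) * 3) :=
      mul_le_mul_of_nonneg_left
        (mul_le_mul_of_nonneg_left e3 (Real.exp_pos (β * t)).le) hC.le
    have e5 : C * Real.exp (β * a) ≤ C * Real.exp (β * t) :=
      mul_le_mul_of_nonneg_left e2 hC.le
    nlinarith [e4, e5, e1]
  -- the target exponential
  have hts : -((α - β) / 2) * t = -s := by rw [hs]; ring
  rw [hts]
  have hmagic : 2 * h * Real.exp (α * t) * (C * Real.exp (-s)) = 4 * C * Real.exp (β * t) := by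
    rw [hh]
    have : Real.exp (-s) * Real.exp (α * t) * Real.exp (-s) = Real.exp (β * t) := by
      rw [← Real.exp_add, ← Real.exp_add]; congr 1; rw [hs]; ring
    linear_combination 4 * C * this
  have hLe : 0 ≤ L * Real.exp (-s) := mul_nonneg hL (Real.exp_pos (-s)).le
  have hCe : 0 < C * Real.exp (-s) := mul_pos hC (Real.exp_pos (-s))
  rcases le_or_gt (|g t|) (L * h) with hcase | hcase
  · have hLh : L * h = 2 * (L * Real.exp (-s)) := by rw [hh]; ring
    have hgoal : (C + 4 * L) * Real.exp (-s)
        = C * Real.exp (-s) + 4 * (L * Real.exp (-s)) := by ring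
    rw [hgoal]; linarith
  · have h4 : (|g t| - L * h) * (2 * h * Real.exp (α * t)) ≤ (|g t| - L * h) * I2 :=
      mul_le_mul_of_nonneg_left hI2lb (by linarith)
    have h5 : (|g t| - L * h) * (2 * h * Real.exp (α * t))
        ≤ 2 * h * Real.exp (α * t) * (C * Real.exp (-s)) := by
      rw [hmagic]; linarith [hkey, hrhs]
    have h6 : |g t| - L * h ≤ C * Real.exp (-s) := by
      have hpos : 0 < 2 * h * Real.exp (α * t) := by positivity
      refine le_of_mul_le_mul_right ?_ hpos
      calc (|g t| - L * h) * (2 * h * Real.exp (α * t))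
          ≤ 2 * h * Real.exp (α * t) * (C * Real.exp (-s)) := h5
        _ = C * Real.exp (-s) * (2 * h * Real.exp (α * t)) := by ring
    have hLh : L * h = 2 * (L * Real.exp (-s)) := by rw [hh]; ring
    have hgoal : (C + 4 * L) * Real.exp (-s)
        = C * Real.exp (-s) + 4 * (L * Real.exp (-s)) := by ring
    rw [hgoal]; linarith
end

section
/- Let g : ℝ → ℝ be continuous, let 0 < β < α, κ > 0, ε > 0, and let [T, T'] be a nontrivial interval on which |g(t)| > κ e^{-(α-β)t + εt} for all t. If |∫_{-∞}^S e^{αt} g(t) dt| ≤ C̃ e^{βS} for all S ∈ ℝ and T ≥ (1/ε) log(2C̃(β+ε)/κ), then T' - T < (4C̃/κ) e^{-εT}. -/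
/-!
On `[T, T']` the continuous function `g` has no zero, hence a constant sign, so
`|∫_T^{T'} e^{αt} g|` is at least `∫_T^{T'} κ e^{(β+ε)t} = κ e^{(β+ε)T} (e^{(β+ε)(T'-T)} - 1)/(β+ε)`,
while writing it as a difference of two integrals over half-lines bounds it by
`C e^{βT} (e^{β(T'-T)} + 1)`. With `u = e^{(β+ε)(T'-T)}` this reads
`κ e^{εT} (u - 1) ≤ C (β+ε) (u + 1)`; the condition on `T` says `2C(β+ε) ≤ κ e^{εT}`,
which forces `u ≤ 3`, and then `1 + (β+ε)(T'-T) < u` gives the bound on `T' - T`.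
-/

open MeasureTheory Set

theorem IsPreconnected.pos_or_neg_of_ne_zero {s : Set ℝ} (hs : IsPreconnected s) {f : ℝ → ℝ}
    (hf : ContinuousOn f s) (hf0 : ∀ x ∈ s, f x ≠ 0) :
    (∀ x ∈ s, 0 < f x) ∨ (∀ x ∈ s, f x < 0) := by
  by_contra! ⟨⟨x, hx, hfx⟩, ⟨y, hy, hfy⟩⟩
  obtain ⟨z, hz, hfz⟩ := hs.intermediate_value hx hy hf ⟨hfx, hfy⟩
  exact hf0 z hz hfz

namespace intervalIntegral

theorem abs_integral_eq_integral_abs_of_ne_zero {f : ℝ → ℝ} {a b : ℝ}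
    (hab : a ≤ b) (hf : ContinuousOn f (Icc a b)) (hf0 : ∀ x ∈ Icc a b, f x ≠ 0) :
    |∫ x in a..b, f x| = ∫ x in a..b, |f x| := by
  rcases isPreconnected_Icc.pos_or_neg_of_ne_zero hf hf0 with hpos | hneg
  · rw [abs_of_nonneg (integral_nonneg hab fun x hx => (hpos x hx).le)]
    refine integral_congr fun x hx => (abs_of_pos (hpos x ?_)).symm
    rwa [uIcc_of_le hab] at hx
  · have hcongr : ∫ x in a..b, |f x| = ∫ x in a..b, -f x :=
      integral_congr fun x hx => abs_of_neg (hneg x (by rwa [uIcc_of_le hab] at hx))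
    rw [hcongr, integral_neg, abs_of_nonpos]
    simpa using integral_nonneg hab fun x hx => (neg_pos.mpr (hneg x hx)).le

theorem integral_le_abs_integral_of_lt_abs {f h : ℝ → ℝ} {a b : ℝ} (hab : a ≤ b)
    (hf : ContinuousOn f (Icc a b)) (hh : IntervalIntegrable h volume a b)
    (hh0 : ∀ x ∈ Icc a b, 0 ≤ h x) (hhf : ∀ x ∈ Icc a b, h x < |f x|) :
    ∫ x in a..b, h x ≤ |∫ x in a..b, f x| := by
  rw [abs_integral_eq_integral_abs_of_ne_zero hab hf
    fun x hx => abs_pos.mp ((hh0 x hx).trans_lt (hhf x hx))]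
  exact integral_mono_on hab hh (hf.abs.intervalIntegrable_of_Icc hab) fun x hx => (hhf x hx).le

theorem integral_exp_mul (c a b : ℝ) (hc : c ≠ 0) :
    ∫ t in a..b, Real.exp (c * t) = (Real.exp (c * b) - Real.exp (c * a)) / c := by
  rw [integral_comp_mul_left (fun x => Real.exp x) hc, integral_exp, smul_eq_mul, inv_mul_eq_div]

theorem abs_integral_le_of_abs_integral_Iic_le {f : ℝ → ℝ} {C β : ℝ}
    (hf : ∀ S, IntegrableOn f (Iic S)) (hbd : ∀ S, |∫ t in Iic S, f t| ≤ C * Real.exp (β * S))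
    (a b : ℝ) : |∫ t in a..b, f t| ≤ C * Real.exp (β * b) + C * Real.exp (β * a) := by
  rw [← integral_Iic_sub_Iic (hf a) (hf b)]
  exact (abs_sub _ _).trans (add_le_add (hbd b) (hbd a))

end intervalIntegral

theorem mul_lt_four_mul_of_mul_exp_sub_one_le {K M x : ℝ} (hM : 0 < M) (hMK : 2 * M ≤ K)
    (hx : 0 < x) (h : K * (Real.exp x - 1) ≤ M * (Real.exp x + 1)) : K * x < 4 * M := by
  have hexp : x + 1 < Real.exp x := Real.add_one_lt_exp hx.ne'
  have hle3 : Real.exp x ≤ 3 := by nlinarith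
  nlinarith

theorem sub_lt_of_mul_integral_exp_le {β ε C κ T T' : ℝ} (hβ : 0 < β) (hε : 0 < ε)
    (hC : 0 < C) (hκ : 0 < κ) (hTT' : T < T') (hTε : 2 * C * (β + ε) ≤ κ * Real.exp (ε * T))
    (h : κ * ((Real.exp ((β + ε) * T') - Real.exp ((β + ε) * T)) / (β + ε)) ≤
      C * Real.exp (β * T') + C * Real.exp (β * T)) :
    T' - T < (4 * C / κ) * Real.exp (-ε * T) := by
  set c := β + ε with hc
  have hc0 : 0 < c := by positivity
  set u := Real.exp (c * (T' - T))
  have hscaled : κ * Real.exp (ε * T) * (u - 1) ≤ C * c * (u + 1) := by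
    have hcT' : Real.exp (c * T') = Real.exp (β * T) * (Real.exp (ε * T) * u) := by
      rw [← Real.exp_add, ← Real.exp_add, hc]; ring_nf
    have hcT : Real.exp (c * T) = Real.exp (β * T) * Real.exp (ε * T) := by
      rw [← Real.exp_add, hc]; ring_nf
    have hβT' : Real.exp (β * T') ≤ Real.exp (β * T) * u := by
      rw [← Real.exp_add, Real.exp_le_exp, hc]; nlinarith
    rw [hcT', hcT, mul_div_assoc', div_le_iff₀ hc0] at h
    refine le_of_mul_le_mul_left ?_ (Real.exp_pos (β * T))
    nlinarith [mul_le_mul_of_nonneg_left hβT' (mul_pos hC hc0).le]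
  have hδ := mul_lt_four_mul_of_mul_exp_sub_one_le (mul_pos hC hc0) (by linarith)
    (mul_pos hc0 (sub_pos.2 hTT')) hscaled
  rw [neg_mul, Real.exp_neg, ← div_eq_mul_inv, lt_div_iff₀ (Real.exp_pos _), lt_div_iff₀ hκ]
  nlinarith

theorem stmt2_general (α β C κ ε : ℝ) (hβ : 0 < β) (hC : 0 < C)
    (hκ : 0 < κ) (hε : 0 < ε) (g : ℝ → ℝ) (hg : Continuous g)
    (hint : ∀ S : ℝ, IntegrableOn (fun t => Real.exp (α * t) * g t) (Iic S))
    (hbd : ∀ S : ℝ, |∫ t in Iic S, Real.exp (α * t) * g t| ≤ C * Real.exp (β * S))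
    (T T' : ℝ) (hTT' : T < T')
    (hgt : ∀ t ∈ Icc T T', κ * Real.exp (-(α - β) * t + ε * t) < |g t|)
    (hT : (1 / ε) * Real.log (2 * C * (β + ε) / κ) ≤ T) :
    T' - T < (4 * C / κ) * Real.exp (-ε * T) := by
  have hlower : ∀ t ∈ Icc T T', κ * Real.exp ((β + ε) * t) < |Real.exp (α * t) * g t| :=
    fun t ht => calc
      κ * Real.exp ((β + ε) * t) = Real.exp (α * t) * (κ * Real.exp (-(α - β) * t + ε * t)) := by
        rw [mul_left_comm, ← Real.exp_add]; ring_nf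
      _ < |Real.exp (α * t) * g t| := by
        rw [abs_mul, Real.abs_exp]
        exact mul_lt_mul_of_pos_left (hgt t ht) (Real.exp_pos _)
  refine sub_lt_of_mul_integral_exp_le hβ hε hC hκ hTT' ?_ ?_
  · rw [one_div_mul_eq_div, div_le_iff₀' hε, Real.log_le_iff_le_exp (by positivity),
      div_le_iff₀ hκ] at hT
    linarith
  · calc _ = ∫ t in T..T', κ * Real.exp ((β + ε) * t) := by
          rw [intervalIntegral.integral_const_mul,
            intervalIntegral.integral_exp_mul _ _ _ (by positivity)]
      _ ≤ |∫ t in T..T', Real.exp (α * t) * g t| :=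
          intervalIntegral.integral_le_abs_integral_of_lt_abs hTT'.le (by fun_prop)
            (Continuous.intervalIntegrable (by fun_prop) _ _) (fun _ _ => by positivity) hlower
      _ ≤ _ := intervalIntegral.abs_integral_le_of_abs_integral_Iic_le hint hbd T T'

theorem stmt2 (α β C κ ε : ℝ) (hβ : 0 < β) (hβα : β < α) (hC : 0 < C)
    (hκ : 0 < κ) (hε : 0 < ε) (g : ℝ → ℝ) (hg : Continuous g)
    (hint : ∀ S : ℝ, IntegrableOn (fun t => Real.exp (α * t) * g t) (Iic S))
    (hbd : ∀ S : ℝ, |∫ t in Iic S, Real.exp (α * t) * g t| ≤ C * Real.exp (β * S))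
    (T T' : ℝ) (hTT' : T < T')
    (hgt : ∀ t ∈ Icc T T', κ * Real.exp (-(α - β) * t + ε * t) < |g t|)
    (hT : (1 / ε) * Real.log (2 * C * (β + ε) / κ) ≤ T) :
    T' - T < (4 * C / κ) * Real.exp (-ε * T) :=
  stmt2_general α β C κ ε hβ hC hκ hε g hg hint hbd T T' hTT' hgt hT
end

section
/- Let d ≥ 2, let B ⊂ ℝ^d be a bounded star-shaped body with vol(B) > 0, and suppose there exist constants C₀ > 0, 1 < α < d, β ≥ 0 and R₀ ≥ 2 such that |#(RB ∩ ℤ^d) − vol(B) R^d| ≤ C₀ R^α (log R)^β for all R ≥ R₀. Then there exists a constant C₁, depending only on α, β, d, vol(B) and C₀, such that |#(RB ∩ Ẑ^d) − (vol(B)/ζ(d)) R^d| ≤ C₁ R^α (log R)^β for all R ≥ R₀, where Ẑ^d is the set of primitive integer vectors and ζ is the Riemann zeta function. -/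
/-!
Every nonzero integer vector is `k • y` for a unique `k ≥ 1` (the gcd of its coordinates) and a
unique primitive `y`. Hence, if `N r` and `P r` count the nonzero and the primitive lattice points
of `r • B`, then `N r = ∑_{k ≥ 1} P (r / k)`, a finite sum because `B` is bounded, and Möbius
inversion over multiples gives `P R = ∑_{k ≤ K} μ k * N (R / k)` for every `K ≥ R · sup_B ‖·‖`.
Inserting `N r = vol B * r ^ d + O(r ^ α log ^ β r)` for `r ≥ R₀` and `N r = O(1)` below `R₀`,
the main terms add up to `vol B * R ^ d * ∑_{k ≤ K} μ k / k ^ d = vol B * R ^ d / ζ d + O(R)`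
and the error terms to `C₀ ζ(α) R ^ α log ^ β R + O(K)`; since `α > 1` and `K = O(R)`, the
`O(R)` terms are absorbed into `R ^ α log ^ β R`.
-/

open Finset Metric MeasureTheory Pointwise
open scoped ArithmeticFunction.Moebius

theorem sum_divisors_moebius_eq {R : Type*} [Ring R] (n : ℕ) :
    ∑ k ∈ n.divisors, (μ k : R) = if n = 1 then 1 else 0 := by
  have h := congrArg (· n) (ArithmeticFunction.coe_moebius_mul_coe_zeta (R := R))
  simpa only [ArithmeticFunction.coe_mul_zeta_apply, ArithmeticFunction.intCoe_apply,
    ArithmeticFunction.one_apply] using h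

theorem filter_Icc_product_mul_eq {K n : ℕ} (hn : n ≠ 0) (hnK : n ≤ K) :
    {p ∈ Icc 1 K ×ˢ Icc 1 K | p.1 * p.2 = n} = n.divisorsAntidiagonal := by
  ext ⟨a, b⟩
  simp only [mem_filter, mem_product, mem_Icc, Nat.mem_divisorsAntidiagonal]
  constructor
  · rintro ⟨-, rfl⟩
    exact ⟨rfl, hn⟩
  · rintro ⟨rfl, hab⟩
    have ha := Nat.pos_of_ne_zero (left_ne_zero_of_mul hab)
    have hb := Nat.pos_of_ne_zero (right_ne_zero_of_mul hab)
    refine ⟨⟨⟨ha, ?_⟩, hb, ?_⟩, rfl⟩ <;> nlinarith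

theorem sum_moebius_mul_sum_mul_eq {R : Type*} [CommRing R] (G : ℕ → R) (K : ℕ)
    (hG : ∀ n, K < n → G n = 0) :
    ∑ k ∈ Icc 1 K, (μ k : R) * ∑ m ∈ Icc 1 K, G (k * m) = G 1 := by
  have hmaps : ∀ p ∈ Icc 1 K ×ˢ Icc 1 K, p.1 * p.2 ∈ Icc 1 (K * K) := by
    simp only [mem_product, mem_Icc, and_imp, Prod.forall]
    intro k m hk hkK hm hmK
    exact ⟨Nat.one_le_iff_ne_zero.mpr (by positivity), Nat.mul_le_mul hkK hmK⟩
  have hfiber : ∀ n ∈ Icc 1 (K * K),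
      ∑ p ∈ Icc 1 K ×ˢ Icc 1 K with p.1 * p.2 = n, (μ p.1 : R) * G (p.1 * p.2) =
        if n = 1 then G 1 else 0 := by
    intro n hn
    rcases le_or_gt n K with hnK | hnK
    · rw [filter_Icc_product_mul_eq (by simp at hn; omega) hnK,
        sum_congr rfl fun p hp => by rw [(Nat.mem_divisorsAntidiagonal.mp hp).1], ← sum_mul,
        Nat.sum_divisorsAntidiagonal (fun a _ => (μ a : R)), sum_divisors_moebius_eq]
      split_ifs with h <;> simp [h]
    · rw [if_neg (by rintro rfl; simp at hn; nlinarith)]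
      exact sum_eq_zero fun p hp => by rw [(mem_filter.mp hp).2, hG n hnK, mul_zero]
  calc ∑ k ∈ Icc 1 K, (μ k : R) * ∑ m ∈ Icc 1 K, G (k * m)
      = ∑ p ∈ Icc 1 K ×ˢ Icc 1 K, (μ p.1 : R) * G (p.1 * p.2) := by
        simp_rw [sum_product, mul_sum]
    _ = ∑ n ∈ Icc 1 (K * K), if n = 1 then G 1 else 0 := by
        rw [← sum_fiberwise_of_maps_to hmaps]
        exact sum_congr rfl hfiber
    _ = G 1 := by
        rw [sum_ite_eq']
        split_ifs with h
        · rfl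
        · exact (hG 1 (by simp at h; nlinarith)).symm

theorem smul_subset_closedBall_zero {E : Type*} [NormedAddCommGroup E] [NormedSpace ℝ E]
    {B : Set E} {M r s : ℝ} (hB : B ⊆ closedBall 0 M) (hr : 0 ≤ r) (hrs : r * M ≤ s) :
    r • B ⊆ closedBall 0 s := by
  rintro _ ⟨x, hx, rfl⟩
  rw [mem_closedBall_zero_iff, norm_smul, Real.norm_of_nonneg hr]
  exact (mul_le_mul_of_nonneg_left (mem_closedBall_zero_iff.mp (hB hx)) hr).trans hrs

theorem Set.abs_ncard_sdiff_singleton_sub_ncard_le {α : Type*} (s : Set α) (a : α) :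
    |((s \ {a}).ncard : ℝ) - s.ncard| ≤ 1 := by
  have h₁ := Set.ncard_sdiff_singleton_le s a
  have h₂ := Set.pred_ncard_le_ncard_sdiff_singleton s a
  rw [abs_le]
  constructor
  · have : s.ncard ≤ (s \ {a}).ncard + 1 := by omega
    have := (Nat.cast_le (α := ℝ)).mpr this
    push_cast at this
    linarith
  · have := (Nat.cast_le (α := ℝ)).mpr h₁
    linarith

section LatticePoints

variable {ι : Type*}

def intPoints (S : Set (ι → ℝ)) : Set (ι → ℤ) := {x | (fun i => (x i : ℝ)) ∈ S}

theorem intPoints_mono {S T : Set (ι → ℝ)} (h : S ⊆ T) : intPoints S ⊆ intPoints T :=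
  fun _ hx => h hx

theorem smul_mem_intPoints_iff {S : Set (ι → ℝ)} {k : ℕ} (hk : k ≠ 0) {y : ι → ℤ} :
    (k : ℤ) • y ∈ intPoints S ↔ y ∈ intPoints ((k : ℝ)⁻¹ • S) := by
  have hcast : (fun i => (((k : ℤ) • y) i : ℝ)) = (k : ℝ) • fun i => (y i : ℝ) := by
    ext i; simp
  simp only [intPoints, Set.mem_ofPred_eq, hcast,
    Set.mem_inv_smul_set_iff₀ (Nat.cast_ne_zero.mpr hk : (k : ℝ) ≠ 0)]

variable [Fintype ι]

def vecGcd (x : ι → ℤ) : ℕ := univ.gcd fun i => (x i).natAbs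

def primitivePoints (S : Set (ι → ℝ)) : Set (ι → ℤ) :=
  {x | x ≠ 0 ∧ vecGcd x = 1 ∧ (fun i => (x i : ℝ)) ∈ S}

theorem vecGcd_smul (k : ℕ) (x : ι → ℤ) : vecGcd ((k : ℤ) • x) = k * vecGcd x := by
  simpa [vecGcd, Int.natAbs_mul] using
    gcd_mul_left (s := univ) (f := fun i => (x i).natAbs) (a := k)

theorem vecGcd_eq_zero_iff {x : ι → ℤ} : vecGcd x = 0 ↔ x = 0 := by
  simp [vecGcd, Finset.gcd_eq_zero_iff, funext_iff]

theorem vecGcd_le_of_mem_closedBall {x : ι → ℤ} {K : ℝ} (hx : x ≠ 0)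
    (hK : (fun i => (x i : ℝ)) ∈ closedBall 0 K) : (vecGcd x : ℝ) ≤ K := by
  obtain ⟨i, hi⟩ := Function.ne_iff.mp hx
  have hdvd : vecGcd x ≤ (x i).natAbs :=
    Nat.le_of_dvd (Int.natAbs_pos.mpr hi) (gcd_dvd (mem_univ i))
  calc (vecGcd x : ℝ) ≤ |(x i : ℝ)| := by
        rw [← Int.cast_abs, Int.abs_eq_natAbs]; exact_mod_cast hdvd
    _ ≤ K := (norm_le_pi_norm _ i).trans (mem_closedBall_zero_iff.mp hK)

theorem exists_eq_vecGcd_smul {x : ι → ℤ} (hx : x ≠ 0) :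
    ∃ y, vecGcd y = 1 ∧ x = (vecGcd x : ℤ) • y := by
  have hg : vecGcd x ≠ 0 := vecGcd_eq_zero_iff.not.mpr hx
  have hdvd : ∀ i, (vecGcd x : ℤ) ∣ x i := fun i =>
    Int.natCast_dvd.mpr (gcd_dvd (f := fun i => (x i).natAbs) (mem_univ i))
  have hxy : x = (vecGcd x : ℤ) • fun i => x i / vecGcd x := by
    ext i; simp [Int.mul_ediv_cancel' (hdvd i)]
  refine ⟨_, ?_, hxy⟩
  have := congrArg vecGcd hxy
  rw [vecGcd_smul] at this
  exact (mul_eq_left₀ hg).mp this.symm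

theorem setOf_vecGcd_eq_eq_image {S : Set (ι → ℝ)} {k : ℕ} (hk : k ≠ 0) :
    {x ∈ intPoints S | vecGcd x = k} =
      (fun y => (k : ℤ) • y) '' primitivePoints ((k : ℝ)⁻¹ • S) := by
  ext x
  constructor
  · rintro ⟨hxS, rfl⟩
    have hx : x ≠ 0 := vecGcd_eq_zero_iff.not.mp hk
    obtain ⟨y, hy, hxy⟩ := exists_eq_vecGcd_smul hx
    refine ⟨y, ⟨?_, hy, ?_⟩, hxy.symm⟩
    · rintro rfl
      exact hx (by simpa using hxy)
    · exact (smul_mem_intPoints_iff hk).mp (hxy ▸ hxS)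
  · rintro ⟨y, ⟨-, hy, hyS⟩, rfl⟩
    exact ⟨(smul_mem_intPoints_iff hk).mpr hyS, by rw [vecGcd_smul, hy, mul_one]⟩

theorem intPoints_finite {S : Set (ι → ℝ)} (hS : Bornology.IsBounded S) : (intPoints S).Finite := by
  classical
  obtain ⟨M, hM⟩ := hS.exists_norm_le
  refine (Set.finite_Icc (fun _ => -⌈M⌉) fun _ => ⌈M⌉).subset fun x hx => ?_
  have hxi : ∀ i, |x i| ≤ ⌈M⌉ := fun i => by
    have := (norm_le_pi_norm _ i).trans (hM _ hx)
    rw [Real.norm_eq_abs, ← Int.cast_abs] at this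
    exact_mod_cast this.trans (Int.le_ceil M)
  exact ⟨fun i => (abs_le.mp (hxi i)).1, fun i => (abs_le.mp (hxi i)).2⟩

theorem ncard_intPoints_sdiff_zero_eq_sum {S : Set (ι → ℝ)} {K : ℕ} (hS : S ⊆ closedBall 0 K) :
    (intPoints S \ {0}).ncard = ∑ k ∈ Icc 1 K, (primitivePoints ((k : ℝ)⁻¹ • S)).ncard := by
  classical
  have hfin : (intPoints S \ {0}).Finite :=
    (intPoints_finite (isBounded_closedBall.subset hS)).sdiff
  have hmaps : ∀ x ∈ hfin.toFinset, vecGcd x ∈ Icc 1 K := by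
    intro x hx
    obtain ⟨hxS, hx0 : x ≠ 0⟩ := hfin.mem_toFinset.mp hx
    refine mem_Icc.mpr ⟨Nat.one_le_iff_ne_zero.mpr (vecGcd_eq_zero_iff.not.mpr hx0), ?_⟩
    exact_mod_cast vecGcd_le_of_mem_closedBall hx0 (hS hxS)
  rw [Set.ncard_eq_toFinset_card _ hfin, card_eq_sum_card_fiberwise hmaps]
  refine sum_congr rfl fun k hk => ?_
  have hk0 : k ≠ 0 := by simp at hk; omega
  rw [← Set.ncard_coe_finset,
    ← (smul_right_injective _ (Int.natCast_ne_zero.mpr hk0)).injOn.ncard_image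
      (s := primitivePoints ((k : ℝ)⁻¹ • S)), ← setOf_vecGcd_eq_eq_image hk0]
  congr 1
  ext x
  simp only [coe_filter, Set.Finite.mem_toFinset, Set.mem_sdiff, Set.mem_singleton_iff,
    Set.mem_sep_iff]
  exact ⟨fun h => ⟨h.1.1, h.2⟩, fun h => ⟨⟨h.1, vecGcd_eq_zero_iff.not.mp (h.2 ▸ hk0)⟩, h.2⟩⟩

theorem primitivePoints_inv_smul_eq_empty {S : Set (ι → ℝ)} {K n : ℕ} (hS : S ⊆ closedBall 0 K)
    (hn : K < n) : primitivePoints ((n : ℝ)⁻¹ • S) = ∅ := by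
  refine Set.eq_empty_of_forall_notMem fun y hy => ?_
  have hn0 : n ≠ 0 := by omega
  have hmem : (n : ℤ) • y ∈ {x ∈ intPoints S | vecGcd x = n} := by
    rw [setOf_vecGcd_eq_eq_image hn0]
    exact Set.mem_image_of_mem _ hy
  obtain ⟨hxS, hxn⟩ := hmem
  have hx0 : (n : ℤ) • y ≠ 0 := vecGcd_eq_zero_iff.not.mp (by rw [hxn]; exact hn0)
  have := vecGcd_le_of_mem_closedBall hx0 (hS hxS)
  rw [hxn] at this
  exact absurd (Nat.cast_le.mp this) (not_le.mpr hn)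

theorem ncard_primitivePoints_eq_sum_moebius {S : Set (ι → ℝ)} {K : ℕ} (hS : S ⊆ closedBall 0 K) :
    ((primitivePoints S).ncard : ℤ) =
      ∑ k ∈ Icc 1 K, μ k * ((intPoints ((k : ℝ)⁻¹ • S) \ {0}).ncard : ℤ) := by
  set G : ℕ → ℤ := fun n => (primitivePoints ((n : ℝ)⁻¹ • S)).ncard
  have hG : ∀ n, K < n → G n = 0 := fun n hn => by
    simp [G, primitivePoints_inv_smul_eq_empty hS hn]
  have hcount : ∀ k ∈ Icc 1 K,
      ((intPoints ((k : ℝ)⁻¹ • S) \ {0}).ncard : ℤ) = ∑ m ∈ Icc 1 K, G (k * m) := by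
    intro k hk
    have hk0 : k ≠ 0 := by simp at hk; omega
    have hk1 : (1 : ℝ) ≤ k := Nat.one_le_cast.mpr (Nat.one_le_iff_ne_zero.mpr hk0)
    have hkS : (k : ℝ)⁻¹ • S ⊆ closedBall 0 K :=
      smul_subset_closedBall_zero hS (by positivity) (by
        rw [inv_mul_le_iff₀ (by positivity)]; exact le_mul_of_one_le_left (Nat.cast_nonneg K) hk1)
    rw [ncard_intPoints_sdiff_zero_eq_sum hkS]
    push_cast
    simp_rw [G, smul_smul, Nat.cast_mul, mul_inv, mul_comm]
  have hinv := sum_moebius_mul_sum_mul_eq G K hG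
  simp only [Int.cast_id] at hinv
  rw [sum_congr rfl fun k hk => by rw [hcount k hk], hinv]
  simp [G]

theorem exists_abs_ncard_intPoints_sdiff_zero_sub_le (d : ℕ) {B : Set (ι → ℝ)} {M V C₀ α β R₀ : ℝ}
    (hB : B ⊆ closedBall 0 M) (hM : 0 ≤ M) (hV : 0 ≤ V) (hR₀ : 0 ≤ R₀)
    (h0 : ∀ r ≥ R₀, |((intPoints (r • B)).ncard : ℝ) - V * r ^ d| ≤ C₀ * r ^ α * Real.log r ^ β) :
    ∃ c, 0 ≤ c ∧
      (∀ r ≥ R₀, |((intPoints (r • B) \ {0}).ncard : ℝ) - V * r ^ d| ≤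
        C₀ * r ^ α * Real.log r ^ β + c) ∧
      ∀ r, 0 < r → r < R₀ → |((intPoints (r • B) \ {0}).ncard : ℝ) - V * r ^ d| ≤ c := by
  set T := intPoints (closedBall (0 : ι → ℝ) (R₀ * M))
  have hT : (0 : ℝ) ≤ T.ncard + V * R₀ ^ d := by positivity
  refine ⟨T.ncard + V * R₀ ^ d + 1, by positivity, fun r hr => ?_, fun r hr hrR₀ => ?_⟩
  · linarith [h0 r hr, Set.abs_ncard_sdiff_singleton_sub_ncard_le (intPoints (r • B)) 0,
      abs_sub_le ((intPoints (r • B) \ {0}).ncard : ℝ) (intPoints (r • B)).ncard (V * r ^ d)]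
  · have hcount : (intPoints (r • B) \ {0}).ncard ≤ T.ncard :=
      Set.ncard_le_ncard (Set.sdiff_subset.trans (intPoints_mono
        (smul_subset_closedBall_zero hB hr.le (by gcongr)))) (intPoints_finite isBounded_closedBall)
    have hcount' := (Nat.cast_le (α := ℝ)).mpr hcount
    have hvol : V * r ^ d ≤ V * R₀ ^ d := by gcongr
    rw [abs_le]
    constructor
    · have : (0 : ℝ) ≤ ((intPoints (r • B) \ {0}).ncard : ℝ) := by positivity
      linarith
    · have : (0 : ℝ) ≤ V * r ^ d := by positivity
      linarith

end LatticePoints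

section MoebiusSeries

theorem abs_moebius_div_pow_le (d n : ℕ) : |(μ n : ℝ) / (n : ℝ) ^ d| ≤ 1 / (n : ℝ) ^ d := by
  rw [abs_div, abs_of_nonneg (by positivity : (0 : ℝ) ≤ (n : ℝ) ^ d)]
  gcongr
  exact_mod_cast ArithmeticFunction.abs_moebius_le_one

variable {d : ℕ}

theorem summable_moebius_div_pow (hd : 1 < d) : Summable fun n : ℕ => (μ n : ℝ) / (n : ℝ) ^ d :=
  .of_norm_bounded (Real.summable_one_div_nat_pow.mpr hd) (abs_moebius_div_pow_le d)

theorem tsum_moebius_div_pow_mul_tsum_one_div_add_one_pow (hd : 1 < d) :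
    (∑' n : ℕ, (μ n : ℝ) / (n : ℝ) ^ d) * ∑' n : ℕ, 1 / ((n : ℝ) + 1) ^ d = 1 := by
  have hs : 1 < (d : ℂ).re := by simpa using hd
  have hμ : ((∑' n : ℕ, (μ n : ℝ) / (n : ℝ) ^ d : ℝ) : ℂ) = LSeries (fun n => (μ n : ℂ)) d := by
    rw [Complex.ofReal_tsum]
    refine tsum_congr fun n => ?_
    rcases eq_or_ne n 0 with rfl | hn
    · simp [LSeries.term]
    · simp [LSeries.term, hn, div_eq_mul_inv]
  have hζ : ((∑' n : ℕ, 1 / ((n : ℝ) + 1) ^ d : ℝ) : ℂ) = LSeries 1 d := by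
    rw [LSeries_one_eq_riemannZeta hs, zeta_eq_tsum_one_div_nat_add_one_cpow hs,
      Complex.ofReal_tsum]
    simp
  have := LSeries_one_mul_Lseries_moebius hs
  rw [← hμ, ← hζ, mul_comm] at this
  exact_mod_cast this

theorem abs_moebius_div_pow_le_of_le (hd : 2 ≤ d) {K n : ℕ} (hK : K ≠ 0) (hKn : K ≤ n) :
    |(μ n : ℝ) / (n : ℝ) ^ d| ≤ ((K : ℝ) ^ (d - 2))⁻¹ * ((n : ℝ) ^ 2)⁻¹ := by
  refine (abs_moebius_div_pow_le d n).trans ?_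
  rw [← Nat.sub_add_cancel hd, pow_add, Nat.add_sub_cancel, one_div, mul_inv]
  have : 0 < K := Nat.pos_of_ne_zero hK
  gcongr

theorem sum_range_inv_sq_add_le (K n : ℕ) :
    ∑ i ∈ range n, (((i + (K + 1) : ℕ) : ℝ) ^ 2)⁻¹ ≤ 2 / (K + 1) := by
  rw [range_eq_Ico, sum_Ico_add' (fun j : ℕ => ((j : ℝ) ^ 2)⁻¹), zero_add, Ico_add_one_left_eq_Ioo]
  exact sum_Ioo_inv_sq_le K _

theorem abs_tsum_moebius_div_pow_sub_sum_le (hd : 2 ≤ d) {K : ℕ} (hK : K ≠ 0) :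
    |∑' n : ℕ, (μ n : ℝ) / (n : ℝ) ^ d - ∑ n ∈ Icc 1 K, (μ n : ℝ) / (n : ℝ) ^ d| ≤
      2 / (K : ℝ) ^ (d - 1) := by
  set f : ℕ → ℝ := fun n => (μ n : ℝ) / (n : ℝ) ^ d
  have hKpos : (0 : ℝ) < K := by positivity
  have hIcc : ∑ n ∈ Icc 1 K, f n = ∑ n ∈ range (K + 1), f n := by
    rw [Nat.range_succ_eq_Icc_zero, ← insert_Icc_add_one_left_eq_Icc (Nat.zero_le K),
      sum_insert (by simp)]
    simp [f]
  have hpartial : ∀ n, ∑ i ∈ range n, |f (i + (K + 1))| ≤ ((K : ℝ) ^ (d - 2))⁻¹ * (2 / (K + 1)) :=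
    fun n => calc
      _ ≤ ∑ i ∈ range n, ((K : ℝ) ^ (d - 2))⁻¹ * (((i + (K + 1) : ℕ) : ℝ) ^ 2)⁻¹ :=
          sum_le_sum fun i _ => abs_moebius_div_pow_le_of_le hd hK (by omega)
      _ ≤ _ := by rw [← mul_sum]; gcongr; exact sum_range_inv_sq_add_le K n
  have htail := (summable_moebius_div_pow (d := d) (by omega)).sum_add_tsum_nat_add (K + 1)
  calc |∑' n, f n - ∑ n ∈ Icc 1 K, f n| = |∑' i, f (i + (K + 1))| := by
        rw [hIcc, ← htail, add_sub_cancel_left]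
    _ ≤ ∑' i, |f (i + (K + 1))| :=
        norm_tsum_le_tsum_norm (f := fun i => f (i + (K + 1)))
          (summable_of_sum_range_le (fun _ => abs_nonneg _) hpartial)
    _ ≤ ((K : ℝ) ^ (d - 2))⁻¹ * (2 / (K + 1)) :=
        Real.tsum_le_of_sum_range_le (fun _ => abs_nonneg _) hpartial
    _ ≤ ((K : ℝ) ^ (d - 2))⁻¹ * (2 / K) := by gcongr; linarith
    _ = 2 / (K : ℝ) ^ (d - 1) := by
        rw [show d - 1 = d - 2 + 1 by omega, pow_succ]
        field_simp

theorem abs_mul_sum_moebius_div_pow_sub_tsum_le (hd : 2 ≤ d) {V R : ℝ} (hV : 0 ≤ V) (hR : 0 < R)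
    {K : ℕ} (hRK : R ≤ K) :
    |V * R ^ d * (∑ k ∈ Icc 1 K, (μ k : ℝ) / (k : ℝ) ^ d - ∑' n : ℕ, (μ n : ℝ) / (n : ℝ) ^ d)| ≤
      2 * V * R := by
  have hK : K ≠ 0 := by rintro rfl; simp at hRK; linarith
  rw [abs_mul, abs_of_nonneg (by positivity), abs_sub_comm]
  calc _ ≤ V * R ^ d * (2 / (K : ℝ) ^ (d - 1)) := by
        gcongr; exact abs_tsum_moebius_div_pow_sub_sum_le hd hK
    _ ≤ V * R ^ d * (2 / R ^ (d - 1)) := by gcongr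
    _ = 2 * V * R := by
        rw [← Nat.sub_add_cancel (by omega : 1 ≤ d), pow_succ, Nat.add_sub_cancel]
        field_simp

theorem sum_moebius_mul_sub_mul_pow_eq (s : Finset ℕ) (N : ℝ → ℝ) (V F R : ℝ) :
    ∑ k ∈ s, (μ k : ℝ) * N (R / k) - V * F * R ^ d =
      ∑ k ∈ s, (μ k : ℝ) * (N (R / k) - V * (R / k) ^ d) +
        V * R ^ d * (∑ k ∈ s, (μ k : ℝ) / (k : ℝ) ^ d - F) := by
  have hmain : ∑ k ∈ s, (μ k : ℝ) * (V * (R / k) ^ d) =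
      V * R ^ d * ∑ k ∈ s, (μ k : ℝ) / (k : ℝ) ^ d := by
    rw [mul_sum]
    exact sum_congr rfl fun k _ => by rw [div_pow]; ring
  simp only [mul_sub, sum_sub_distrib, hmain]
  ring

end MoebiusSeries

section Asymptotics

open Real

theorem rpow_mul_log_rpow_div_le {R α β : ℝ} (hβ : 0 ≤ β) {k : ℕ} (hk : k ≠ 0) (hRk : 1 ≤ R / k) :
    (R / k) ^ α * log (R / k) ^ β ≤ R ^ α * log R ^ β / (k : ℝ) ^ α := by
  have hk1 : (1 : ℝ) ≤ k := Nat.one_le_cast.mpr (Nat.one_le_iff_ne_zero.mpr hk)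
  have hR : 0 < R := by
    have := (one_le_div (by positivity)).mp hRk
    linarith
  rw [div_rpow hR.le (by positivity), div_mul_eq_mul_div]
  gcongr
  · exact log_nonneg hRk
  · exact div_le_self hR.le hk1

theorem mul_log_two_rpow_le {R α β : ℝ} (hR : 2 ≤ R) (hα : 1 ≤ α) (hβ : 0 ≤ β) :
    R * log 2 ^ β ≤ R ^ α * log R ^ β := by
  have hR1 : 1 ≤ R := by linarith
  gcongr
  simpa using rpow_le_rpow_of_exponent_le hR1 hα

variable {d : ℕ} {N : ℝ → ℝ} {V C₀ α β R₀ c : ℝ}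

theorem abs_sub_le_of_large_of_small (hC₀ : 0 ≤ C₀) (hβ : 0 ≤ β) (hR₀ : 1 ≤ R₀)
    (hlarge : ∀ r ≥ R₀, |N r - V * r ^ d| ≤ C₀ * r ^ α * log r ^ β + c)
    (hsmall : ∀ r, 0 < r → r < R₀ → |N r - V * r ^ d| ≤ c) {R : ℝ} (hR : 1 ≤ R)
    {k : ℕ} (hk : k ≠ 0) :
    |N (R / k) - V * (R / k) ^ d| ≤ C₀ * R ^ α * log R ^ β / (k : ℝ) ^ α + c := by
  rcases le_or_gt R₀ (R / k) with hRk | hRk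
  · calc |N (R / k) - V * (R / k) ^ d| ≤ C₀ * ((R / k) ^ α * log (R / k) ^ β) + c := by
          rw [← mul_assoc]; exact hlarge _ hRk
      _ ≤ C₀ * (R ^ α * log R ^ β / (k : ℝ) ^ α) + c := by
          gcongr; exact rpow_mul_log_rpow_div_le hβ hk (hR₀.trans hRk)
      _ = C₀ * R ^ α * log R ^ β / (k : ℝ) ^ α + c := by ring
  · have : 0 ≤ C₀ * R ^ α * log R ^ β / (k : ℝ) ^ α := by
      have := log_nonneg hR
      positivity
    linarith [hsmall _ (by positivity) hRk]

theorem sum_abs_sub_le_of_large_of_small (hC₀ : 0 ≤ C₀) (hα : 1 < α) (hβ : 0 ≤ β)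
    (hR₀ : 1 ≤ R₀) (hlarge : ∀ r ≥ R₀, |N r - V * r ^ d| ≤ C₀ * r ^ α * log r ^ β + c)
    (hsmall : ∀ r, 0 < r → r < R₀ → |N r - V * r ^ d| ≤ c) {R : ℝ} (hR : 1 ≤ R) (K : ℕ) :
    ∑ k ∈ Icc 1 K, |N (R / k) - V * (R / k) ^ d| ≤
      C₀ * (∑' n : ℕ, 1 / (n : ℝ) ^ α) * R ^ α * log R ^ β + K * c := by
  have hζ : ∑ k ∈ Icc 1 K, 1 / (k : ℝ) ^ α ≤ ∑' n : ℕ, 1 / (n : ℝ) ^ α :=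
    (Real.summable_one_div_nat_rpow.mpr hα).sum_le_tsum _ fun _ _ => by positivity
  have hL : 0 ≤ C₀ * R ^ α * log R ^ β := by
    have := log_nonneg hR
    positivity
  calc ∑ k ∈ Icc 1 K, |N (R / k) - V * (R / k) ^ d|
      ≤ ∑ k ∈ Icc 1 K, (C₀ * R ^ α * log R ^ β * (1 / (k : ℝ) ^ α) + c) :=
        sum_le_sum fun k hk => by
          rw [mul_one_div]
          exact abs_sub_le_of_large_of_small hC₀ hβ hR₀ hlarge hsmall hR (by simp at hk; omega)
    _ = C₀ * R ^ α * log R ^ β * ∑ k ∈ Icc 1 K, 1 / (k : ℝ) ^ α + K * c := by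
        simp [sum_add_distrib, mul_sum]
    _ ≤ C₀ * (∑' n : ℕ, 1 / (n : ℝ) ^ α) * R ^ α * log R ^ β + K * c := by
        nlinarith

theorem exists_abs_sum_moebius_mul_sub_le (hd : 2 ≤ d) (hV : 0 ≤ V) (hC₀ : 0 ≤ C₀) (hα : 1 < α)
    (hβ : 0 ≤ β) (hR₀ : 2 ≤ R₀) (hc : 0 ≤ c)
    (hlarge : ∀ r ≥ R₀, |N r - V * r ^ d| ≤ C₀ * r ^ α * log r ^ β + c)
    (hsmall : ∀ r, 0 < r → r < R₀ → |N r - V * r ^ d| ≤ c) (A : ℝ) :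
    ∃ C₁ : ℝ, ∀ R ≥ R₀, ∀ K : ℕ, R ≤ K → K ≤ A * R →
      |∑ k ∈ Icc 1 K, (μ k : ℝ) * N (R / k) - V / (∑' n : ℕ, 1 / ((n : ℝ) + 1) ^ d) * R ^ d| ≤
        C₁ * R ^ α * log R ^ β := by
  have hFZ := tsum_moebius_div_pow_mul_tsum_one_div_add_one_pow (d := d) (by omega)
  refine ⟨C₀ * ∑' n : ℕ, 1 / (n : ℝ) ^ α + (A * c + 2 * V) * (log 2 ^ β)⁻¹,
    fun R hR K hRK hKA => ?_⟩
  have hR2 : 2 ≤ R := hR₀.trans hR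
  have hA : 0 ≤ A := by nlinarith
  have herror : |∑ k ∈ Icc 1 K, (μ k : ℝ) * (N (R / k) - V * (R / k) ^ d)| ≤
      C₀ * (∑' n : ℕ, 1 / (n : ℝ) ^ α) * R ^ α * log R ^ β + A * c * R := by
    calc _ ≤ ∑ k ∈ Icc 1 K, |N (R / k) - V * (R / k) ^ d| := by
          refine (abs_sum_le_sum_abs _ _).trans (sum_le_sum fun k _ => ?_)
          rw [abs_mul]
          exact mul_le_of_le_one_left (abs_nonneg _)
            (mod_cast ArithmeticFunction.abs_moebius_le_one)
      _ ≤ C₀ * (∑' n : ℕ, 1 / (n : ℝ) ^ α) * R ^ α * log R ^ β + K * c :=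
          sum_abs_sub_le_of_large_of_small hC₀ hα hβ (by linarith) hlarge hsmall (by linarith) K
      _ ≤ _ := by nlinarith
  have htail := abs_mul_sum_moebius_div_pow_sub_tsum_le hd hV (by linarith) hRK
  have hlin : R ≤ (log 2 ^ β)⁻¹ * (R ^ α * log R ^ β) := by
    rw [inv_mul_eq_div, le_div_iff₀ (by positivity)]
    exact mul_log_two_rpow_le hR2 hα.le hβ
  rw [div_eq_mul_one_div V, ← eq_one_div_of_mul_eq_one_left hFZ, sum_moebius_mul_sub_mul_pow_eq]
  calc _ ≤ _ := abs_add_le _ _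
    _ ≤ C₀ * (∑' n : ℕ, 1 / (n : ℝ) ^ α) * R ^ α * log R ^ β + (A * c + 2 * V) * R := by
        linarith
    _ ≤ C₀ * (∑' n : ℕ, 1 / (n : ℝ) ^ α) * R ^ α * log R ^ β +
          (A * c + 2 * V) * ((log 2 ^ β)⁻¹ * (R ^ α * log R ^ β)) := by
        gcongr
    _ = _ := by ring

end Asymptotics

theorem stmt6_general (d : ℕ) (hd : 2 ≤ d) (B : Set (Fin d → ℝ))
    (hBb : Bornology.IsBounded B)
    (C₀ α β R₀ : ℝ) (hC₀ : 0 < C₀) (hα₁ : 1 < α) (hβ : 0 ≤ β) (hR₀ : 2 ≤ R₀)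
    (h0 : ∀ R ≥ R₀,
      |(Nat.card {x : Fin d → ℤ | (fun i => (x i : ℝ)) ∈ R • B} : ℝ)
        - (volume B).toReal * R ^ d| ≤ C₀ * R ^ α * Real.log R ^ β) :
    ∃ C₁ : ℝ, ∀ R ≥ R₀,
      |(Nat.card {x : Fin d → ℤ | x ≠ 0 ∧ Finset.univ.gcd (fun i => (x i).natAbs) = 1 ∧
          (fun i => (x i : ℝ)) ∈ R • B} : ℝ)
        - ((volume B).toReal / (∑' n : ℕ, 1 / ((n : ℝ) + 1) ^ d)) * R ^ d|
        ≤ C₁ * R ^ α * Real.log R ^ β := by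
  obtain ⟨M, hM1, hBM⟩ : ∃ M, 1 ≤ M ∧ B ⊆ closedBall 0 M :=
    let ⟨M, hM⟩ := hBb.subset_closedBall 0
    ⟨max M 1, le_max_right _ _, hM.trans (closedBall_subset_closedBall (le_max_left _ _))⟩
  have hV : 0 ≤ (volume B).toReal := ENNReal.toReal_nonneg
  obtain ⟨c, hc, hlarge, hsmall⟩ :=
    exists_abs_ncard_intPoints_sdiff_zero_sub_le d hBM (by linarith) hV (by linarith) h0
  obtain ⟨C₁, hC₁⟩ :=
    exists_abs_sum_moebius_mul_sub_le hd hV hC₀.le hα₁ hβ hR₀ hc hlarge hsmall (M + 1)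
  refine ⟨C₁, fun R hR => ?_⟩
  have hR1 : 1 ≤ R := by linarith
  have hK : R • B ⊆ closedBall 0 ⌈R * M⌉₊ :=
    smul_subset_closedBall_zero hBM (by linarith) (Nat.le_ceil _)
  have hRK : R ≤ ⌈R * M⌉₊ := le_trans (by nlinarith) (Nat.le_ceil _)
  have hKA : (⌈R * M⌉₊ : ℝ) ≤ (M + 1) * R :=
    (Nat.ceil_lt_add_one (by positivity)).le.trans (by nlinarith)
  convert hC₁ R hR _ hRK hKA using 3
  change ((primitivePoints (R • B)).ncard : ℝ) = _
  rw [← Int.cast_natCast, ncard_primitivePoints_eq_sum_moebius hK]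
  push_cast
  simp_rw [smul_smul, inv_mul_eq_div]

theorem stmt6 (d : ℕ) (hd : 2 ≤ d) (B : Set (Fin d → ℝ))
    (hBm : MeasurableSet B) (hBb : Bornology.IsBounded B)
    (hstar : ∀ x ∈ B, ∀ t : ℝ, t ∈ Set.Icc (0 : ℝ) 1 → t • x ∈ B)
    (hvol : 0 < (volume B).toReal)
    (C₀ α β R₀ : ℝ) (hC₀ : 0 < C₀) (hα₁ : 1 < α) (hαd : α < d) (hβ : 0 ≤ β) (hR₀ : 2 ≤ R₀)
    (h0 : ∀ R ≥ R₀,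
      |(Nat.card {x : Fin d → ℤ | (fun i => (x i : ℝ)) ∈ R • B} : ℝ)
        - (volume B).toReal * R ^ d| ≤ C₀ * R ^ α * Real.log R ^ β) :
    ∃ C₁ : ℝ, ∀ R ≥ R₀,
      |(Nat.card {x : Fin d → ℤ | x ≠ 0 ∧ Finset.univ.gcd (fun i => (x i).natAbs) = 1 ∧
          (fun i => (x i : ℝ)) ∈ R • B} : ℝ)
        - ((volume B).toReal / (∑' n : ℕ, 1 / ((n : ℝ) + 1) ^ d)) * R ^ d|
        ≤ C₁ * R ^ α * Real.log R ^ β :=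
  stmt6_general d hd B hBb C₀ α β R₀ hC₀ hα₁ hβ hR₀ h0
end
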